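/- arXiv:2004.09475 — 6 statements merged into one kernel-verified Lean document; each statement's English description precedes it below -/
import Mathlib

section
/- For any real number λ > 0, the function (c,u) ↦ (u·c) / ((u+λ)·(c+λ)) is NOT concave on the set {(c,u) ∈ ℝ² : c ≥ 0 and u ≥ 0}; that is, although it is concave in u for fixed c and concave in c for fixed u, it is not jointly concave in (c,u). -/
lemma concave_base (lam : ℝ) (hlam : 0 < lam) :
    ConcaveOn ℝ (Set.Ici 0) (fun x : ℝ => x / (x + lam)) := by
  refine ⟨convex_Ici 0, ?_⟩
  intro x hx y hy a b ha hb hab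
  simp only [smul_eq_mul]
  have hx0 : (0:ℝ) ≤ x := hx
  have hy0 : (0:ℝ) ≤ y := hy
  have hx' : 0 < x + lam := by linarith
  have hy' : 0 < y + lam := by linarith
  have hz : 0 < a * x + b * y + lam := by nlinarith
  rw [← mul_div_assoc, ← mul_div_assoc, div_add_div _ _ (ne_of_gt hx') (ne_of_gt hy'), div_le_div_iff₀ (by positivity) hz]
  have hb' : b = 1 - a := by linarith
  subst hb'
  nlinarith [mul_nonneg (mul_nonneg (mul_nonneg hlam.le ha) hb) (sq_nonneg (x - y))]

lemma concave_scaled (lam : ℝ) (hlam : 0 < lam) (c : ℝ) (hc : 0 ≤ c) :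
    ConcaveOn ℝ (Set.Ici 0) (fun u : ℝ => (u * c) / ((u + lam) * (c + lam))) := by
  have hsc : (0:ℝ) ≤ c / (c + lam) := by positivity
  have h := (concave_base lam hlam).smul hsc
  have heq : (fun u : ℝ => (u * c) / ((u + lam) * (c + lam)))
      = (c / (c + lam)) • (fun x : ℝ => x / (x + lam)) := by
    funext u
    simp only [Pi.smul_apply, smul_eq_mul, div_mul_div_comm]
    ring_nf
  rw [heq]
  exact h

/-- For λ > 0, (c,u) ↦ (u·c)/((u+λ)(c+λ)) is concave in u for fixed c ≥ 0 and concave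
in c for fixed u ≥ 0, but is NOT jointly concave on {(c,u) : c ≥ 0, u ≥ 0}. -/
theorem freshness_not_jointly_concave (lam : ℝ) (hlam : 0 < lam) :
    (∀ c : ℝ, 0 ≤ c →
      ConcaveOn ℝ (Set.Ici 0) (fun u : ℝ => (u * c) / ((u + lam) * (c + lam)))) ∧
    (∀ u : ℝ, 0 ≤ u →
      ConcaveOn ℝ (Set.Ici 0) (fun c : ℝ => (u * c) / ((u + lam) * (c + lam)))) ∧
    ¬ ConcaveOn ℝ {p : ℝ × ℝ | 0 ≤ p.1 ∧ 0 ≤ p.2}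
        (fun p : ℝ × ℝ => (p.2 * p.1) / ((p.2 + lam) * (p.1 + lam))) := by
  refine ⟨fun c hc => concave_scaled lam hlam c hc, fun u hu => ?_, ?_⟩
  · have h := concave_scaled lam hlam u hu
    convert h using 2 with c
    ring_nf
  · intro h
    have h00 : ((0:ℝ), (0:ℝ)) ∈ {p : ℝ × ℝ | 0 ≤ p.1 ∧ 0 ≤ p.2} := ⟨le_refl _, le_refl _⟩
    have hll : ((lam:ℝ), (lam:ℝ)) ∈ {p : ℝ × ℝ | 0 ≤ p.1 ∧ 0 ≤ p.2} :=
      ⟨le_of_lt hlam, le_of_lt hlam⟩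
    have key := h.2 h00 hll (by norm_num : (0:ℝ) ≤ 1/2) (by norm_num : (0:ℝ) ≤ 1/2)
      (by norm_num)
    simp only [Prod.smul_mk, smul_eq_mul, Prod.mk_add_mk, mul_zero, zero_add] at key
    have e1 : (1/2 : ℝ) * lam + lam = (3/2) * lam := by ring
    rw [e1] at key
    have h1 : ((1/2:ℝ) * lam * ((1/2) * lam)) / ((3/2) * lam * ((3/2) * lam))
        = 1/9 := by
      field_simp
      ring
    have h2 : (lam * lam) / ((lam + lam) * (lam + lam)) = 1/4 := by
      field_simp
      ring
    rw [h1, h2] at key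
    norm_num at key
end

section
/- Let λ > 0, let m ≥ 1, and let c : ℕ → ℝ satisfy c r > 0 for 1 ≤ r ≤ m. Define W : ℕ → ℝ by W 1 = 1/(c 1) and W (r+1) = ((c (r+1) + λ)/(c (r+1))) · W r + 1/(c (r+1)) for r ≥ 1. Then for every r with 1 ≤ r ≤ m, (1/λ) / (1/λ + W r) = Π_{ℓ=1}^{r} (c ℓ) / (c ℓ + λ). -/
/-- The long-term average freshness at cache r in the multi-cache system:
(1/λ)/(1/λ + W r) = Π_{ℓ=1}^{r} (c ℓ)/(c ℓ + λ). -/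
theorem cache_freshness_multi (lam : ℝ) (hlam : 0 < lam) (m : ℕ) (hm : 1 ≤ m)
    (c : ℕ → ℝ) (hc : ∀ r, 1 ≤ r → r ≤ m → 0 < c r)
    (W : ℕ → ℝ) (hW1 : W 1 = 1 / c 1)
    (hWrec : ∀ r, 1 ≤ r → W (r + 1) = ((c (r + 1) + lam) / c (r + 1)) * W r + 1 / c (r + 1)) :
    ∀ r, 1 ≤ r → r ≤ m →
      (1 / lam) / (1 / lam + W r) = ∏ l ∈ Finset.Icc 1 r, c l / (c l + lam) := by
  have key : ∀ r, 1 ≤ r → r ≤ m →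
      1 / lam + W r = (1 / lam) * ∏ l ∈ Finset.Icc 1 r, (c l + lam) / c l := by
    intro r
    induction r with
    | zero => intro h; omega
    | succ n ih =>
      intro _ hle
      rcases Nat.eq_zero_or_pos n with hn | hn
      · subst hn
        simp only [Finset.Icc_self, Finset.prod_singleton, hW1]
        have hc1 := hc 1 le_rfl hle
        field_simp
      · have hle' : n ≤ m := by omega
        have ihn := ih hn hle'
        rw [hWrec n hn]
        have hcn := hc (n + 1) (by omega) hle
        have hWn : W n = 1 / lam * (∏ l ∈ Finset.Icc 1 n, (c l + lam) / c l) - 1 / lam := by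
          linarith [ihn]
        rw [Finset.prod_Icc_succ_top (by omega : 1 ≤ n + 1), hWn]
        generalize (∏ l ∈ Finset.Icc 1 n, (c l + lam) / c l) = P
        field_simp
        ring
  intro r h1 h2
  have hk := key r h1 h2
  rw [hk]
  have hpos : ∀ l ∈ Finset.Icc 1 r, 0 < (c l + lam) / c l := by
    intro l hl
    simp only [Finset.mem_Icc] at hl
    have := hc l hl.1 (le_trans hl.2 h2)
    positivity
  have hprod : 0 < ∏ l ∈ Finset.Icc 1 r, (c l + lam) / c l := Finset.prod_pos hpos
  rw [div_mul_eq_div_div, div_self (by positivity), one_div, ← Finset.prod_inv_distrib]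
  exact Finset.prod_congr rfl fun l hl => inv_div _ _
end

section
/- Let λ > 0, u > 0, let m ≥ 1, and let c : ℕ → ℝ satisfy c r > 0 for 1 ≤ r ≤ m. Define W : ℕ → ℝ by W 1 = 1/(c 1) and W (r+1) = ((c (r+1) + λ)/(c (r+1))) · W r + 1/(c (r+1)) for r ≥ 1. Then (1/λ) / ((1/λ + W m) · ((u+λ)/u)) = (u/(u+λ)) · Π_{r=1}^{m} (c r) / (c r + λ). -/
/-! Shifting by the source's mean inter-update time turns the affine recursion for `W` into a
multiplicative one: `1/λ + W (r+1) = ((c (r+1) + λ) / c (r+1)) · (1/λ + W r)`, and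
`1/λ + W 1 = (1/λ) · (c 1 + λ) / c 1`. Hence `1/λ + W m` is `1/λ` times a product, whose
inverse is the product in the claim. -/

section OutdatedDuration

variable {K : Type*} [Field K] {lam : K}

theorem one_div_add_affine_step {a w : K} (hlam : lam ≠ 0) (ha : a ≠ 0) :
    1 / lam + ((a + lam) / a * w + 1 / a) = (a + lam) / a * (1 / lam + w) := by
  field_simp
  ring

theorem one_div_add_eq_mul_prod {c W : ℕ → K} {m : ℕ} (hlam : lam ≠ 0)
    (hc : ∀ r, 1 ≤ r → r ≤ m → c r ≠ 0) (hW1 : W 1 = 1 / c 1)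
    (hWrec : ∀ r, 1 ≤ r → W (r + 1) = (c (r + 1) + lam) / c (r + 1) * W r + 1 / c (r + 1))
    {n : ℕ} (hn : 1 ≤ n) (hnm : n ≤ m) :
    1 / lam + W n = 1 / lam * ∏ r ∈ Finset.Icc 1 n, (c r + lam) / c r := by
  induction n, hn using Nat.le_induction with
  | base =>
    rw [hW1, Finset.Icc_self, Finset.prod_singleton]
    field_simp [hc 1 le_rfl hnm]
  | succ k hk ih =>
    rw [hWrec k hk, one_div_add_affine_step hlam (hc (k + 1) (by omega) hnm), ih (by omega),
      Finset.prod_Icc_succ_top (by omega)]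
    ring

end OutdatedDuration

theorem user_freshness_multi_general (lam u : ℝ) (hlam : 0 < lam)
    (m : ℕ) (hm : 1 ≤ m)
    (c : ℕ → ℝ) (hc : ∀ r, 1 ≤ r → r ≤ m → 0 < c r)
    (W : ℕ → ℝ) (hW1 : W 1 = 1 / c 1)
    (hWrec : ∀ r, 1 ≤ r → W (r + 1) = ((c (r + 1) + lam) / c (r + 1)) * W r + 1 / c (r + 1)) :
    (1 / lam) / ((1 / lam + W m) * ((u + lam) / u)) =
      (u / (u + lam)) * ∏ r ∈ Finset.Icc 1 m, c r / (c r + lam) := by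
  rw [one_div_add_eq_mul_prod hlam.ne' (fun r h1 h2 => (hc r h1 h2).ne') hW1 hWrec hm le_rfl,
    mul_assoc, div_mul_cancel_left₀ (one_div_ne_zero hlam.ne'), mul_inv_rev, inv_div,
    ← Finset.prod_inv_distrib]
  simp only [inv_div]

/-- The user's long-term average freshness in the m-cache system:
(1/λ) / ((1/λ + W m)·((u+λ)/u)) = (u/(u+λ)) · Π_{r=1}^{m} (c r)/(c r + λ). -/
theorem user_freshness_multi (lam u : ℝ) (hlam : 0 < lam) (hu : 0 < u)
    (m : ℕ) (hm : 1 ≤ m)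
    (c : ℕ → ℝ) (hc : ∀ r, 1 ≤ r → r ≤ m → 0 < c r)
    (W : ℕ → ℝ) (hW1 : W 1 = 1 / c 1)
    (hWrec : ∀ r, 1 ≤ r → W (r + 1) = ((c (r + 1) + lam) / c (r + 1)) * W r + 1 / c (r + 1)) :
    (1 / lam) / ((1 / lam + W m) * ((u + lam) / u)) =
      (u / (u + lam)) * ∏ r ∈ Finset.Icc 1 m, c r / (c r + lam) :=
  user_freshness_multi_general lam u hlam m hm c hc W hW1 hWrec
end

section
/- Let n ≥ 1, let λ : Fin n → ℝ with λ i > 0 for all i, and let C > 0, U > 0. Let S = {(c,u) : (Fin n → ℝ) × (Fin n → ℝ) | (∀ i, c i ≥ 0 ∧ u i ≥ 0) ∧ Σ_i c i ≤ C ∧ Σ_i u i ≤ U}, and let F(c,u) = Σ_i (u i · c i) / ((u i + λ i)·(c i + λ i)). If (c,u) ∈ S is a maximizer of F over S, then for every index i, c i = 0 implies u i = 0, and u i = 0 implies c i = 0. -/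
/-- strict monotonicity of u ↦ u*c/((u+λ)(c+λ)) for c > 0. -/
lemma freshness_mono (lam cc : ℝ) (hl : 0 < lam) (hcc : 0 < cc) {a b : ℝ}
    (ha : 0 ≤ a) (hab : a < b) :
    a * cc / ((a + lam) * (cc + lam)) < b * cc / ((b + lam) * (cc + lam)) := by
  have hb : 0 < b := lt_of_le_of_lt ha hab
  have h1 : 0 < (a + lam) * (cc + lam) := by positivity
  have h2 : 0 < (b + lam) * (cc + lam) := by positivity
  rw [div_lt_div_iff₀ h1 h2]
  nlinarith [mul_pos (mul_pos (mul_pos hcc (add_pos hcc hl)) hl) (sub_pos.mpr hab)]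

lemma sum_erase_eq (n : ℕ) (f : Fin n → ℝ) (i : Fin n) :
    (∑ k ∈ Finset.univ \ {i}, f k) = (∑ k, f k) - f i := by
  rw [← Finset.erase_eq]
  have := Finset.add_sum_erase Finset.univ f (Finset.mem_univ i)
  linarith

/-- Key one-sided lemma. -/
lemma key (n : ℕ) (lam : Fin n → ℝ) (hlam : ∀ i, 0 < lam i) (C : ℝ) (hC : 0 < C)
    (c u : Fin n → ℝ) (hc : ∀ k, 0 ≤ c k) (hu : ∀ k, 0 ≤ u k) (hsc : (∑ k, c k) ≤ C)
    (hopt : ∀ c' u' : Fin n → ℝ, (∀ k, 0 ≤ c' k) → (∀ k, 0 ≤ u' k) → (∑ k, c' k) ≤ C →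
      (∑ k, u' k) = (∑ k, u k) →
      (∑ k, u' k * c' k / ((u' k + lam k) * (c' k + lam k))) ≤
        ∑ k, u k * c k / ((u k + lam k) * (c k + lam k)))
    (i : Fin n) (hci : c i = 0) : u i = 0 := by
  by_contra hui
  have hui' : 0 < u i := lt_of_le_of_ne (hu i) (Ne.symm hui)
  by_cases hslack : (∑ k, c k) < C
  · -- increase c i using the slack
    set ε := C - ∑ k, c k with hε
    have hεpos : 0 < ε := by simp [hε]; linarith
    set c' := Function.update c i ε with hc'
    have hc'i : c' i = ε := by rw [hc']; exact Function.update_self i ε c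
    have hc'nonneg : ∀ k, 0 ≤ c' k := by
      intro k
      rcases eq_or_ne k i with hk | hk
      · subst hk; rw [hc'i]; exact hεpos.le
      · rw [hc', Function.update_of_ne hk]; exact hc k
    have hsum : (∑ k, c' k) ≤ C := by
      rw [hc', Finset.sum_update_of_mem (Finset.mem_univ i), sum_erase_eq]
      rw [hci]; linarith
    have hlt : (∑ k, u k * c k / ((u k + lam k) * (c k + lam k))) <
        ∑ k, u k * c' k / ((u k + lam k) * (c' k + lam k)) := by
      apply Finset.sum_lt_sum
      · intro k _
        rcases eq_or_ne k i with hk | hk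
        · subst hk
          rw [hci, hc'i]
          have h0 : u k * 0 / ((u k + lam k) * (0 + lam k)) = 0 := by simp
          rw [h0]
          have := hlam k
          positivity
        · rw [hc', Function.update_of_ne hk]
      · refine ⟨i, Finset.mem_univ i, ?_⟩
        rw [hci, hc'i]
        have h0 : u i * 0 / ((u i + lam i) * (0 + lam i)) = 0 := by simp
        rw [h0]
        exact div_pos (mul_pos hui' hεpos)
          (mul_pos (by linarith [hlam i]) (by linarith [hlam i]))
    have := hopt c' u hc'nonneg hu hsum rfl
    linarith
  · -- sum of c equals C, find j with c j > 0 and shift u i onto u j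
    have hsceq : (∑ k, c k) = C := le_antisymm hsc (not_lt.mp hslack)
    have hexj : ∃ j, 0 < c j := by
      by_contra h
      push_neg at h
      have : (∑ k, c k) = 0 := Finset.sum_eq_zero fun k _ => le_antisymm (h k) (hc k)
      linarith
    obtain ⟨j, hj⟩ := hexj
    have hij : i ≠ j := by
      intro h; rw [← h, hci] at hj; exact lt_irrefl 0 hj
    set v := Function.update u i 0 with hv
    set u' := Function.update v j (u j + u i) with hu'
    have hvj : v j = u j := by rw [hv]; exact Function.update_of_ne (Ne.symm hij) _ _
    have hu'j : u' j = u j + u i := by rw [hu']; exact Function.update_self _ _ _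
    have hu'i : u' i = 0 := by
      rw [hu', Function.update_of_ne hij, hv]; exact Function.update_self _ _ _
    have hu'other : ∀ k, k ≠ i → k ≠ j → u' k = u k := by
      intro k hki hkj
      rw [hu', Function.update_of_ne hkj, hv, Function.update_of_ne hki]
    have hu'nonneg : ∀ k, 0 ≤ u' k := by
      intro k
      rcases eq_or_ne k j with hk | hkj
      · subst hk; rw [hu'j]; linarith [hu k, hu i]
      · rcases eq_or_ne k i with hk | hki
        · subst hk; rw [hu'i]
        · rw [hu'other k hki hkj]; exact hu k
    have hsumv : (∑ k, v k) = (∑ k, u k) - u i := by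
      rw [hv, Finset.sum_update_of_mem (Finset.mem_univ i), sum_erase_eq]
      ring
    have hsumu' : (∑ k, u' k) = ∑ k, u k := by
      rw [hu', Finset.sum_update_of_mem (Finset.mem_univ j), sum_erase_eq, hsumv, hvj]
      ring
    have hlt : (∑ k, u k * c k / ((u k + lam k) * (c k + lam k))) <
        ∑ k, u' k * c k / ((u' k + lam k) * (c k + lam k)) := by
      apply Finset.sum_lt_sum
      · intro k _
        rcases eq_or_ne k j with hk | hkj
        · subst hk
          rw [hu'j]
          exact le_of_lt (freshness_mono (lam k) (c k) (hlam k) hj (hu k) (by linarith))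
        · rcases eq_or_ne k i with hk | hki
          · subst hk; rw [hu'i, hci]; simp
          · rw [hu'other k hki hkj]
      · refine ⟨j, Finset.mem_univ j, ?_⟩
        rw [hu'j]
        exact freshness_mono (lam j) (c j) (hlam j) hj (hu j) (by linarith)
    have := hopt c u' hc hu'nonneg hsc hsumu'
    linarith

/-- Lemma 1: at an optimum of the total user freshness, c i = 0 iff u i = 0. -/
theorem optimal_rates_zero_iff (n : ℕ) (hn : 1 ≤ n) (lam : Fin n → ℝ)
    (hlam : ∀ i, 0 < lam i) (C U : ℝ) (hC : 0 < C) (hU : 0 < U)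
    (c u : Fin n → ℝ)
    (hmem : (c, u) ∈ {p : (Fin n → ℝ) × (Fin n → ℝ) |
      (∀ i, p.1 i ≥ 0 ∧ p.2 i ≥ 0) ∧ (∑ i, p.1 i) ≤ C ∧ (∑ i, p.2 i) ≤ U})
    (hopt : IsMaxOn
      (fun p : (Fin n → ℝ) × (Fin n → ℝ) =>
        ∑ i, (p.2 i * p.1 i) / ((p.2 i + lam i) * (p.1 i + lam i)))
      {p : (Fin n → ℝ) × (Fin n → ℝ) |
        (∀ i, p.1 i ≥ 0 ∧ p.2 i ≥ 0) ∧ (∑ i, p.1 i) ≤ C ∧ (∑ i, p.2 i) ≤ U}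
      (c, u)) :
    ∀ i, (c i = 0 → u i = 0) ∧ (u i = 0 → c i = 0) := by
  obtain ⟨hnn, hsc, hsu⟩ := hmem
  have hc : ∀ k, 0 ≤ c k := fun k => (hnn k).1
  have hu : ∀ k, 0 ≤ u k := fun k => (hnn k).2
  intro i
  constructor
  · intro hci
    refine key n lam hlam C hC c u hc hu hsc ?_ i hci
    intro c' u' hc' hu' hsc' hsu'
    have hmem' : ((c', u') : (Fin n → ℝ) × (Fin n → ℝ)) ∈
        {p : (Fin n → ℝ) × (Fin n → ℝ) |
          (∀ i, p.1 i ≥ 0 ∧ p.2 i ≥ 0) ∧ (∑ i, p.1 i) ≤ C ∧ (∑ i, p.2 i) ≤ U} :=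
      ⟨fun k => ⟨hc' k, hu' k⟩, hsc', by rw [hsu']; exact hsu⟩
    exact hopt hmem'
  · intro hui
    refine key n lam hlam U hU u c hu hc hsu ?_ i hui
    intro u' c' hu' hc' hsu' hsc'
    have hmem' : ((c', u') : (Fin n → ℝ) × (Fin n → ℝ)) ∈
        {p : (Fin n → ℝ) × (Fin n → ℝ) |
          (∀ i, p.1 i ≥ 0 ∧ p.2 i ≥ 0) ∧ (∑ i, p.1 i) ≤ C ∧ (∑ i, p.2 i) ≤ U} :=
      ⟨fun k => ⟨hc' k, hu' k⟩, by rw [hsc']; exact hsc, hsu'⟩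
    have h := hopt hmem'
    simp only at h
    calc (∑ k, c' k * u' k / ((c' k + lam k) * (u' k + lam k)))
        = ∑ k, u' k * c' k / ((u' k + lam k) * (c' k + lam k)) := by
          apply Finset.sum_congr rfl; intro k _; ring_nf
      _ ≤ ∑ k, u k * c k / ((u k + lam k) * (c k + lam k)) := h
      _ = ∑ k, c k * u k / ((c k + lam k) * (u k + lam k)) := by
          apply Finset.sum_congr rfl; intro k _; ring_nf
end

section
/- Let n ≥ 1, let λ : Fin n → ℝ with λ i > 0 for all i, and let C > 0, U > 0. Let S = {(c,u) : (Fin n → ℝ) × (Fin n → ℝ) | (∀ i, c i ≥ 0 ∧ u i ≥ 0) ∧ Σ_i c i ≤ C ∧ Σ_i u i ≤ U}, and let F(c,u) = Σ_i (u i · c i) / ((u i + λ i)·(c i + λ i)). If (c,u) ∈ S is a maximizer of F over S, then Σ_i c i = C and Σ_i u i = U. -/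
private lemma aux_frac_lt (a μ x y : ℝ) (ha : 0 < a) (hμ : 0 < μ) (hx : 0 ≤ x)
    (hxy : x < y) :
    (a * x) / ((a + μ) * (x + μ)) < (a * y) / ((a + μ) * (y + μ)) := by
  have hy : 0 < y := lt_of_le_of_lt hx hxy
  rw [div_lt_div_iff₀ (by positivity) (by positivity)]
  nlinarith [mul_pos (mul_pos (mul_pos ha (add_pos ha hμ)) hμ) (sub_pos.mpr hxy)]

/-- Lemma 2: at an optimum of the total user freshness, both total update rate
constraints are tight: Σ c i = C and Σ u i = U. -/
theorem optimal_rates_constraints_tight (n : ℕ) (hn : 1 ≤ n) (lam : Fin n → ℝ)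
    (hlam : ∀ i, 0 < lam i) (C U : ℝ) (hC : 0 < C) (hU : 0 < U)
    (c u : Fin n → ℝ)
    (hmem : (c, u) ∈ {p : (Fin n → ℝ) × (Fin n → ℝ) |
      (∀ i, p.1 i ≥ 0 ∧ p.2 i ≥ 0) ∧ (∑ i, p.1 i) ≤ C ∧ (∑ i, p.2 i) ≤ U})
    (hopt : IsMaxOn
      (fun p : (Fin n → ℝ) × (Fin n → ℝ) =>
        ∑ i, (p.2 i * p.1 i) / ((p.2 i + lam i) * (p.1 i + lam i)))
      {p : (Fin n → ℝ) × (Fin n → ℝ) |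
        (∀ i, p.1 i ≥ 0 ∧ p.2 i ≥ 0) ∧ (∑ i, p.1 i) ≤ C ∧ (∑ i, p.2 i) ≤ U}
      (c, u)) :
    (∑ i, c i) = C ∧ (∑ i, u i) = U := by
  obtain ⟨hnn, hsc, hsu⟩ := hmem
  set F : ((Fin n → ℝ) × (Fin n → ℝ)) → ℝ := fun p =>
    ∑ i, (p.2 i * p.1 i) / ((p.2 i + lam i) * (p.1 i + lam i)) with hF
  set S : Set ((Fin n → ℝ) × (Fin n → ℝ)) := {p : (Fin n → ℝ) × (Fin n → ℝ) |
      (∀ i, p.1 i ≥ 0 ∧ p.2 i ≥ 0) ∧ (∑ i, p.1 i) ≤ C ∧ (∑ i, p.2 i) ≤ U} with hS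
  have i0 : Fin n := ⟨0, hn⟩
  -- test point
  set p0 : (Fin n → ℝ) × (Fin n → ℝ) :=
    ((fun j => if j = i0 then C else 0), (fun j => if j = i0 then U else 0)) with hp0
  have hp0mem : p0 ∈ S := by
    refine ⟨fun j => ⟨?_, ?_⟩, ?_, ?_⟩
    · by_cases h : j = i0 <;> simp [hp0, h, hC.le]
    · by_cases h : j = i0 <;> simp [hp0, h, hU.le]
    · simp only [hp0]
      rw [Finset.sum_ite_eq' Finset.univ i0 (fun _ => C)]
      simp
    · simp only [hp0]
      rw [Finset.sum_ite_eq' Finset.univ i0 (fun _ => U)]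
      simp
  have hFp0 : 0 < F p0 := by
    apply Finset.sum_pos'
    · intro i _
      by_cases h : i = i0
      · subst h
        have := hlam i
        simp only [hp0, if_pos rfl]
        positivity
      · simp [hp0, h]
    · refine ⟨i0, Finset.mem_univ _, ?_⟩
      have := hlam i0
      simp only [hp0, if_pos rfl]
      positivity
  have hFcu : 0 < F (c, u) := lt_of_lt_of_le hFp0 (hopt hp0mem)
  -- there is an index with u i > 0 and c i > 0
  have hterm_nonneg : ∀ i, 0 ≤ (u i * c i) / ((u i + lam i) * (c i + lam i)) := by
    intro i
    have h1 := (hnn i).1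
    have h2 := (hnn i).2
    have := hlam i
    positivity
  obtain ⟨i, _, hi⟩ := Finset.exists_lt_of_sum_lt (by
    simpa using hFcu :
    ∑ i : Fin n, (0 : ℝ) < ∑ i, (u i * c i) / ((u i + lam i) * (c i + lam i)))
  have hden : 0 < (u i + lam i) * (c i + lam i) := by
    have h1 := (hnn i).1; have h2 := (hnn i).2; have := hlam i; positivity
  have hnum : 0 < u i * c i := by
    by_contra h
    push_neg at h
    have : (u i * c i) / ((u i + lam i) * (c i + lam i)) ≤ 0 :=
      div_nonpos_of_nonpos_of_nonneg h hden.le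
    linarith
  have hu : 0 < u i := by nlinarith [(hnn i).1, (hnn i).2]
  have hc : 0 < c i := by nlinarith [(hnn i).1, (hnn i).2]
  constructor
  · -- Σ c = C
    by_contra hne
    have hlt : ∑ j, c j < C := lt_of_le_of_ne hsc hne
    set δ : ℝ := C - ∑ j, c j with hδ
    have hδpos : 0 < δ := by simp [hδ]; linarith
    set c' : Fin n → ℝ := Function.update c i (c i + δ) with hc'
    have hsum' : ∑ j, c' j = C := by
      rw [hc', Finset.sum_update_of_mem (Finset.mem_univ i)]
      have : ∑ j, c j = c i + ∑ j ∈ Finset.univ \ {i}, c j := by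
        rw [Finset.sum_eq_add_sum_sdiff_singleton_of_mem (Finset.mem_univ i)]
      linarith
    have hmem' : ((c', u) : (Fin n → ℝ) × (Fin n → ℝ)) ∈ S := by
      refine ⟨fun j => ⟨?_, (hnn j).2⟩, by simp [hsum'], hsu⟩
      by_cases h : j = i
      · subst h; simp [hc']; linarith [(hnn j).1]
      · simp [hc', Function.update_of_ne h]; exact (hnn j).1
    have hlt2 : F (c, u) < F (c', u) := by
      apply Finset.sum_lt_sum
      · intro j _
        by_cases h : j = i
        · subst h
          simp only [hc', Function.update_self]
          exact (aux_frac_lt (u j) (lam j) (c j) (c j + δ) hu (hlam j) (hnn j).1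
            (by linarith)).le
        · simp [hc', Function.update_of_ne h]
      · refine ⟨i, Finset.mem_univ _, ?_⟩
        simp only [hc', Function.update_self]
        exact aux_frac_lt (u i) (lam i) (c i) (c i + δ) hu (hlam i) (hnn i).1
          (by linarith)
    exact absurd (hopt hmem') (not_le.mpr hlt2)
  · -- Σ u = U
    by_contra hne
    have hlt : ∑ j, u j < U := lt_of_le_of_ne hsu hne
    set δ : ℝ := U - ∑ j, u j with hδ
    have hδpos : 0 < δ := by simp [hδ]; linarith
    set u' : Fin n → ℝ := Function.update u i (u i + δ) with hu'
    have hsum' : ∑ j, u' j = U := by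
      rw [hu', Finset.sum_update_of_mem (Finset.mem_univ i)]
      have : ∑ j, u j = u i + ∑ j ∈ Finset.univ \ {i}, u j := by
        rw [Finset.sum_eq_add_sum_sdiff_singleton_of_mem (Finset.mem_univ i)]
      linarith
    have hmem' : ((c, u') : (Fin n → ℝ) × (Fin n → ℝ)) ∈ S := by
      refine ⟨fun j => ⟨(hnn j).1, ?_⟩, hsc, by simp [hsum']⟩
      by_cases h : j = i
      · subst h; simp [hu']; linarith [(hnn j).2]
      · simp [hu', Function.update_of_ne h]; exact (hnn j).2
    have key : ∀ x y : ℝ, 0 ≤ x → x < y →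
        (x * c i) / ((x + lam i) * (c i + lam i)) <
        (y * c i) / ((y + lam i) * (c i + lam i)) := by
      intro x y hx hxy
      have := aux_frac_lt (c i) (lam i) x y hc (hlam i) hx hxy
      rw [mul_comm (c i) x, mul_comm (c i) y,
        mul_comm (c i + lam i) (x + lam i), mul_comm (c i + lam i) (y + lam i)] at this
      exact this
    have hlt2 : F (c, u) < F (c, u') := by
      apply Finset.sum_lt_sum
      · intro j _
        by_cases h : j = i
        · subst h
          simp only [hu', Function.update_self]
          exact (key (u j) (u j + δ) (hnn j).2 (by linarith)).le
        · simp [hu', Function.update_of_ne h]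
      · refine ⟨i, Finset.mem_univ _, ?_⟩
        simp only [hu', Function.update_self]
        exact key (u i) (u i + δ) (hnn i).2 (by linarith)
    exact absurd (hopt hmem') (not_le.mpr hlt2)
end

section
/- Let n ≥ 1, let λ : Fin n → ℝ with λ i > 0 for all i, let u : Fin n → ℝ with u i ≥ 0 for all i, and let C > 0. Define φ k = (1/(λ k)) · (u k / (u k + λ k)) for each k. Suppose c : Fin n → ℝ maximizes G(c) = Σ_i (u i · c i)/((u i + λ i)·(c i + λ i)) over the set {c | (∀ i, c i ≥ 0) ∧ Σ_i c i ≤ C}. Then for any indices i, j: if u i > 0, c i > 0, and φ j ≥ φ i, then c j > 0. -/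
lemma key_ineq (a b c ui uj ε : ℝ) (ha : 0 < a) (hb : 0 < b) (hc : 0 < c)
    (hui : 0 < ui) (huj : 0 ≤ uj)
    (hphi : ui/(a*(ui+a)) ≤ uj/(b*(uj+b)))
    (hε1 : 0 < ε) (hε2 : ε ≤ c/2) (hε3 : ε < b*c/(2*a)) :
    ui*c/((ui+a)*(c+a)) < uj*ε/((uj+b)*(ε+b)) + ui*(c-ε)/((ui+a)*(c-ε+a)) := by
  have hua : 0 < ui + a := by linarith
  have hub : 0 < uj + b := by linarith
  have hca : 0 < c + a := by linarith
  have hcea : 0 < c - ε + a := by linarith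
  have heb : 0 < ε + b := by linarith
  have hε3' : 2*a*ε < b*c := by
    rw [lt_div_iff₀ (by positivity)] at hε3; linarith
  have hphi' : ui * (b*(uj+b)) ≤ uj * (a*(ui+a)) := by
    rw [div_le_div_iff₀ (by positivity) (by positivity)] at hphi
    linarith
  have h1 : ui*c/((ui+a)*(c+a)) - ui*(c-ε)/((ui+a)*(c-ε+a))
      = ui*a*ε/((ui+a)*((c+a)*(c-ε+a))) := by
    field_simp
    ring
  have key : a*a*(ε+b) < b*((c+a)*(c-ε+a)) := by
    nlinarith [mul_nonneg (mul_pos hb hc).le (by linarith : (0:ℝ) ≤ c - 2*ε),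
      mul_nonneg (mul_pos ha hb).le (by linarith : (0:ℝ) ≤ c - 2*ε),
      mul_pos ha (by linarith : (0:ℝ) < b*c - 2*a*ε), mul_pos (mul_pos ha hb) hc, mul_pos hb (mul_pos hc hc)]
  have h2 : ui*a*ε/((ui+a)*((c+a)*(c-ε+a))) < uj*ε/((uj+b)*(ε+b)) := by
    rw [div_lt_div_iff₀ (by positivity) (by positivity)]
    nlinarith [mul_le_mul_of_nonneg_right hphi' (le_of_lt (mul_pos hε1 (mul_pos hca hcea))),
      mul_lt_mul_of_pos_left key (mul_pos hui (mul_pos hε1 hub)), ha,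
      mul_pos hui (mul_pos hε1 hub)]
  linarith

/-- Lemma 3: for fixed user rates, if the optimal cache rate c i is positive
and φ j ≥ φ i (with φ k = (1/λ k)·(u k/(u k+λ k))), then c j is positive. -/
theorem optimal_cache_rates_threshold (n : ℕ) (hn : 1 ≤ n) (lam : Fin n → ℝ)
    (hlam : ∀ i, 0 < lam i) (u : Fin n → ℝ) (hu : ∀ i, u i ≥ 0)
    (C : ℝ) (hC : 0 < C)
    (phi : Fin n → ℝ) (hphi : ∀ k, phi k = (1 / lam k) * (u k / (u k + lam k)))
    (c : Fin n → ℝ)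
    (hmem : c ∈ {c : Fin n → ℝ | (∀ i, c i ≥ 0) ∧ (∑ i, c i) ≤ C})
    (hopt : IsMaxOn
      (fun c : Fin n → ℝ => ∑ i, (u i * c i) / ((u i + lam i) * (c i + lam i)))
      {c : Fin n → ℝ | (∀ i, c i ≥ 0) ∧ (∑ i, c i) ≤ C} c) :
    ∀ i j, u i > 0 → c i > 0 → phi j ≥ phi i → c j > 0 := by
  intro i j hui hci hφ
  by_contra hcj
  obtain ⟨hnn, hsum⟩ := hmem
  have hcj0 : c j = 0 := le_antisymm (not_lt.mp hcj) (hnn j)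
  have hij : i ≠ j := fun h => by rw [h, hcj0] at hci; exact lt_irrefl 0 hci
  set a := lam i with ha_def
  set b := lam j with hb_def
  have ha : 0 < a := hlam i
  have hb : 0 < b := hlam j
  -- rewrite phi inequality
  have hφ' : u i / (a * (u i + a)) ≤ u j / (b * (u j + b)) := by
    have h1 := hphi i; have h2 := hphi j
    rw [h1, h2] at hφ
    calc u i / (a * (u i + a)) = (1/a) * (u i / (u i + a)) := by
          rw [div_mul_eq_div_div_swap]; ring
      _ ≤ (1/b) * (u j / (u j + b)) := hφ
      _ = u j / (b * (u j + b)) := by rw [div_mul_eq_div_div_swap]; ring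
  -- choose ε
  set ε := min (c i / 2) (b * c i / (4 * a)) with hε_def
  have hε1 : 0 < ε := lt_min (by linarith) (by positivity)
  have hε2 : ε ≤ c i / 2 := min_le_left _ _
  have hε3 : ε < b * c i / (2 * a) := by
    have h4 : ε ≤ b * c i / (4 * a) := min_le_right _ _
    have : b * c i / (4 * a) < b * c i / (2 * a) := by
      apply div_lt_div_of_pos_left (by positivity) (by positivity) (by linarith)
    linarith
  -- the perturbed vector
  set c' := Function.update (Function.update c i (c i - ε)) j ε with hc'_def
  have hc'i : c' i = c i - ε := by
    simp [hc'_def, Function.update_of_ne hij, Function.update_self]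
  have hc'j : c' j = ε := by simp [hc'_def]
  have hc'k : ∀ k, k ≠ i → k ≠ j → c' k = c k := by
    intro k hki hkj
    simp [hc'_def, Function.update_of_ne hkj, Function.update_of_ne hki]
  -- feasibility
  have hmem' : c' ∈ {c : Fin n → ℝ | (∀ i, c i ≥ 0) ∧ (∑ i, c i) ≤ C} := by
    constructor
    · intro k
      rcases eq_or_ne k j with rfl | hkj
      · rw [hc'j]; exact hε1.le
      rcases eq_or_ne k i with rfl | hki
      · rw [hc'i]; linarith
      · rw [hc'k k hki hkj]; exact hnn k
    · have hsum_eq : ∑ k, c' k = ∑ k, c k := by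
        have : ∑ k, (c' k - c k) = 0 := by
          rw [← Finset.sum_subset (Finset.subset_univ ({i, j} : Finset (Fin n)))
            (by intro k _ hk
                simp only [Finset.mem_insert, Finset.mem_singleton, not_or] at hk
                rw [hc'k k hk.1 hk.2]; ring)]
          rw [Finset.sum_pair hij, hc'i, hc'j, hcj0]
          ring
        have := Finset.sum_sub_distrib (f := c') (g := c) (s := Finset.univ)
        rw [this] at * <;> linarith [Finset.sum_sub_distrib (f := c') (g := c) (s := Finset.univ)]
      rw [hsum_eq]; exact hsum
  -- compare objective values
  have hle := hopt hmem'
  simp only [Set.mem_setOf_eq] at hle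
  -- decompose the sums
  set g : Fin n → ℝ → ℝ := fun k x => (u k * x) / ((u k + lam k) * (x + lam k)) with hg_def
  have hdiff : (∑ k, g k (c' k)) - (∑ k, g k (c k))
      = (g i (c' i) - g i (c i)) + (g j (c' j) - g j (c j)) := by
    rw [← Finset.sum_sub_distrib]
    rw [← Finset.sum_subset (Finset.subset_univ ({i, j} : Finset (Fin n)))
      (by intro k _ hk
          simp only [Finset.mem_insert, Finset.mem_singleton, not_or] at hk
          rw [hc'k k hk.1 hk.2]; ring)]
    rw [Finset.sum_pair hij]
  have hle' : (∑ k, g k (c' k)) ≤ ∑ k, g k (c k) := hle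
  -- key inequality
  have huj : 0 ≤ u j := hu j
  have hkey := key_ineq a b (c i) (u i) (u j) ε ha hb hci hui huj hφ' hε1 hε2 hε3
  have hgi : g i (c i) = u i * c i / ((u i + a) * (c i + a)) := rfl
  have hgi' : g i (c' i) = u i * (c i - ε) / ((u i + a) * (c i - ε + a)) := by
    rw [hc'i]
  have hgj' : g j (c' j) = u j * ε / ((u j + b) * (ε + b)) := by rw [hc'j]
  have hgj : g j (c j) = 0 := by
    rw [hcj0]; simp [hg_def]
  rw [hgi, hgi', hgj', hgj] at hdiff
  linarith
end
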